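/- arXiv:1704.03121 — 2 statements merged into one kernel-verified Lean document; each statement's English description precedes it below -/
import Mathlib

section
/- (Theorem 1 for ISTC, parts (i)–(ii)) Under the setting of the ISTC continuation algorithm — Ψ ∈ ℝ^{n×p} with unit-norm columns and mutual coherence μ satisfying μ·s < 1/2; x† ∈ ℝ^p with support A†, |A†| = s ≥ 1; y = Ψ x† + η with ‖η‖₂ ≤ ε > 0; C₁ > 1/(1 − 2μs); α = (1 − 1/C₁)/(μs); γ ∈ [2μs/(1 − 1/C₁), 1); K ≥ 1; λ_ℓ = γ^ℓ λ₀ with ‖x†‖_{ℓ∞} ≤ α γ λ₀; x(λ₀) = 0 and x(λ_ℓ) obtained by K iterations of z ↦ S_{λ_ℓ}(z + Ψᵗ(y − Ψ z)) from x(λ_{ℓ−1}) — let λ* = C₁ ε and let ℓ* be the first index with λ_{ℓ*} < λ*, and set x* = x(λ_{ℓ*−1}). Then (i) supp(x*) ⊂ A†, and (ii) ‖x* − x†‖_{ℓ∞} ≤ (C₁ − 1)ε/(μs). -/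
/-!
Write `w = x† − z` for the current error. Because `Ψ` has unit columns, one Landweber step
`z + Ψᵀ(y − Ψz)` misses `x†` by `(ΨᵀΨ − I) w + Ψᵀη`, whose matrix has zero diagonal and entries
bounded by `μ`; so while `z` is supported in `A†` the error of the Landweber step is at most
`μ s ‖w‖ + ε` in every coordinate. If this is at most `λ`, soft thresholding at level `λ` kills
every coordinate outside `A†` and moves the others by at most `λ`, so the new iterate is still
supported in `A†` and within `2λ` of `x†`. The choice of `α` and `γ` makes `μ s α λ + ε ≤ λ`
whenever `λ ≥ C₁ε`, and `2λ ≤ α γ λ`, so the bound `‖x(λ_ℓ) − x†‖ ≤ α λ_{ℓ+1}` propagates along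
the path as long as `λ_{ℓ+1} ≥ λ*`; at `ℓ = ℓ* − 1` it reads `α λ_{ℓ*} < α C₁ ε = (C₁ − 1)ε/(μs)`.
-/

open Finset Matrix Function Set

noncomputable def softThresh (lam t : ℝ) : ℝ := Real.sign t * max (|t| - lam) 0

lemma softThresh_eq_zero_of_abs_le {lam t : ℝ} (h : |t| ≤ lam) : softThresh lam t = 0 := by
  simp [softThresh, h]

lemma abs_softThresh_sub_self_le {lam : ℝ} (hlam : 0 ≤ lam) (t : ℝ) :
    |softThresh lam t - t| ≤ lam := by
  rcases le_or_gt |t| lam with h | h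
  · simpa [softThresh_eq_zero_of_abs_le h] using h
  · rcases lt_trichotomy t 0 with ht | rfl | ht
    · rw [softThresh, Real.sign_of_neg ht, abs_of_neg ht, max_eq_left (by linarith [abs_of_neg ht])]
      rw [show -1 * (-t - lam) - t = lam by ring, abs_of_nonneg hlam]
    · simp [softThresh, hlam]
    · rw [softThresh, Real.sign_of_pos ht, abs_of_pos ht, max_eq_left (by linarith [abs_of_pos ht])]
      rw [show 1 * (t - lam) - t = -lam by ring, abs_neg, abs_of_nonneg hlam]

section SoftThresholding

variable {ι : Type*} [Fintype ι] {lam δ : ℝ} {t x : ι → ℝ}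

lemma support_softThresh_subset (htx : ‖t - x‖ ≤ δ) (hδ : δ ≤ lam) :
    support (fun i => softThresh lam (t i)) ⊆ support x := by
  intro i hi
  by_contra hxi
  refine hi (softThresh_eq_zero_of_abs_le ?_)
  have hti := (norm_le_pi_norm (t - x) i).trans htx
  rw [Pi.sub_apply, notMem_support.1 hxi, sub_zero, Real.norm_eq_abs] at hti
  exact hti.trans hδ

lemma norm_softThresh_sub_le (htx : ‖t - x‖ ≤ δ) (hδ : δ ≤ lam) :
    ‖(fun i => softThresh lam (t i)) - x‖ ≤ lam + δ := by
  have hδ0 : 0 ≤ δ := (norm_nonneg _).trans htx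
  have hlam : 0 ≤ lam := hδ0.trans hδ
  refine (pi_norm_le_iff_of_nonneg (by linarith)).2 fun i => ?_
  have htxi : |t i - x i| ≤ δ := (norm_le_pi_norm (t - x) i).trans htx
  calc ‖softThresh lam (t i) - x i‖
      = |(softThresh lam (t i) - t i) + (t i - x i)| := by rw [Real.norm_eq_abs]; ring_nf
    _ ≤ lam + δ := (abs_add_le _ _).trans (add_le_add (abs_softThresh_sub_self_le hlam _) htxi)

end SoftThresholding

section Landweber

variable {m ι : Type*} {Ψ : Matrix m ι ℝ} {μ ε : ℝ}

lemma abs_mulVec_apply_le_of_support_subset [Fintype ι] {M : Matrix m ι ℝ}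
    (hM : ∀ i j, |M i j| ≤ μ) {A : Finset ι} {w : ι → ℝ} (hw : support w ⊆ A) (i : m) :
    |(M *ᵥ w) i| ≤ μ * #A * ‖w‖ := by
  have hsum : (M *ᵥ w) i = ∑ j ∈ A, M i j * w j :=
    (sum_subset (subset_univ A) fun j _ hj => by
      rw [notMem_support.1 fun h => hj (hw h), mul_zero]).symm
  calc |(M *ᵥ w) i| ≤ ∑ j ∈ A, |M i j| * |w j| := by
        rw [hsum]; exact (abs_sum_le_sum_abs _ _).trans_eq (by simp only [abs_mul])
    _ ≤ ∑ _j ∈ A, μ * ‖w‖ := sum_le_sum fun j _ =>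
        mul_le_mul (hM i j) (norm_le_pi_norm w j) (abs_nonneg _) ((abs_nonneg _).trans (hM i j))
    _ = μ * #A * ‖w‖ := by rw [sum_const, nsmul_eq_mul]; ring

lemma abs_gram_sub_one_apply_le [Fintype m] [DecidableEq ι] (hcol : ∀ i, ∑ k, Ψ k i ^ 2 = 1)
    (hcoh : ∀ i j, i ≠ j → |∑ k, Ψ k i * Ψ k j| ≤ μ) (hμ : 0 ≤ μ) (i j : ι) :
    |(Ψᵀ * Ψ - 1 : Matrix ι ι ℝ) i j| ≤ μ := by
  rcases eq_or_ne i j with rfl | hij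
  · simp [mul_apply, ← sq, hcol, hμ]
  · simpa [mul_apply, one_apply_ne hij] using hcoh i j hij

lemma abs_transpose_mulVec_apply_le [Fintype m] (hcol : ∀ i, ∑ k, Ψ k i ^ 2 = 1) {η : m → ℝ}
    (hη : √(∑ k, η k ^ 2) ≤ ε) (i : ι) : |(Ψᵀ *ᵥ η) i| ≤ ε := by
  have hcs := sum_mul_sq_le_sq_mul_sq univ (fun k => Ψ k i) η
  rw [hcol i, one_mul] at hcs
  calc |(Ψᵀ *ᵥ η) i| = √((∑ k, Ψ k i * η k) ^ 2) := by
        rw [Real.sqrt_sq_eq_abs]; rfl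
    _ ≤ ε := (Real.sqrt_le_sqrt hcs).trans hη

lemma landweber_sub_eq [Fintype m] [Fintype ι] [DecidableEq ι] (x z : ι → ℝ) (η : m → ℝ) :
    z + Ψᵀ *ᵥ (Ψ *ᵥ x + η - Ψ *ᵥ z) - x = (Ψᵀ * Ψ - 1) *ᵥ (x - z) + Ψᵀ *ᵥ η := by
  simp only [sub_mulVec, one_mulVec, ← mulVec_mulVec, mulVec_sub, mulVec_add]
  abel

lemma norm_landweber_sub_le [Fintype m] [Fintype ι] (hcol : ∀ i, ∑ k, Ψ k i ^ 2 = 1)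
    (hcoh : ∀ i j, i ≠ j → |∑ k, Ψ k i * Ψ k j| ≤ μ) (hμ : 0 ≤ μ)
    {A : Finset ι} {x z : ι → ℝ} (hx : support x ⊆ A) (hz : support z ⊆ A)
    {η : m → ℝ} (hη : √(∑ k, η k ^ 2) ≤ ε) :
    ‖z + Ψᵀ *ᵥ (Ψ *ᵥ x + η - Ψ *ᵥ z) - x‖ ≤ μ * #A * ‖z - x‖ + ε := by
  classical
  have hε : 0 ≤ ε := (Real.sqrt_nonneg _).trans hη
  have hxz : support (x - z) ⊆ A := (support_sub x z).trans (union_subset hx hz)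
  rw [landweber_sub_eq, norm_sub_rev z x]
  refine (norm_add_le _ _).trans (add_le_add ?_ ?_)
  · exact (pi_norm_le_iff_of_nonneg (by positivity)).2 fun i =>
      abs_mulVec_apply_le_of_support_subset (abs_gram_sub_one_apply_le hcol hcoh hμ) hxz i
  · exact (pi_norm_le_iff_of_nonneg hε).2 (abs_transpose_mulVec_apply_le hcol hη)

end Landweber

section ISTA

variable {m ι : Type*} [Fintype m] [Fintype ι]

noncomputable def istaStep (Ψ : Matrix m ι ℝ) (y : m → ℝ) (lam : ℝ) (z : ι → ℝ) : ι → ℝ :=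
  fun i => softThresh lam (z i + (Ψᵀ *ᵥ (y - Ψ *ᵥ z)) i)

def sparseBall (A : Finset ι) (x : ι → ℝ) (r : ℝ) : Set (ι → ℝ) :=
  {z | support z ⊆ A ∧ ‖z - x‖ ≤ r}

lemma sparseBall_mono {A : Finset ι} {x : ι → ℝ} {r r' : ℝ} (h : r ≤ r') :
    sparseBall A x r ⊆ sparseBall A x r' :=
  fun _ hz => ⟨hz.1, hz.2.trans h⟩

variable {Ψ : Matrix m ι ℝ} {μ ε lam r : ℝ} {A : Finset ι} {x : ι → ℝ} {η : m → ℝ}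

lemma istaStep_mapsTo (hcol : ∀ i, ∑ k, Ψ k i ^ 2 = 1)
    (hcoh : ∀ i j, i ≠ j → |∑ k, Ψ k i * Ψ k j| ≤ μ) (hμ : 0 ≤ μ) (hx : support x ⊆ A)
    (hη : √(∑ k, η k ^ 2) ≤ ε) (hr : μ * #A * r + ε ≤ lam) :
    MapsTo (istaStep Ψ (Ψ *ᵥ x + η) lam) (sparseBall A x r) (sparseBall A x (2 * lam)) := by
  rintro z ⟨hzA, hzr⟩
  have hres := norm_landweber_sub_le hcol hcoh hμ hx hzA hη
  have hδ : μ * #A * ‖z - x‖ + ε ≤ lam := le_trans (by gcongr) hr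
  refine ⟨(support_softThresh_subset hres hδ).trans hx, ?_⟩
  exact (norm_softThresh_sub_le hres hδ).trans (by linarith)

lemma iterate_istaStep_mem (hcol : ∀ i, ∑ k, Ψ k i ^ 2 = 1)
    (hcoh : ∀ i j, i ≠ j → |∑ k, Ψ k i * Ψ k j| ≤ μ) (hμ : 0 ≤ μ) (hx : support x ⊆ A)
    (hη : √(∑ k, η k ^ 2) ≤ ε) (hr : μ * #A * r + ε ≤ lam) (hlam : 2 * lam ≤ r)
    {K : ℕ} (hK : 1 ≤ K) {z : ι → ℝ} (hz : z ∈ sparseBall A x r) :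
    (istaStep Ψ (Ψ *ᵥ x + η) lam)^[K] z ∈ sparseBall A x (2 * lam) := by
  have hmaps := istaStep_mapsTo hcol hcoh hμ hx hη hr
  obtain ⟨k, rfl⟩ := Nat.exists_eq_add_of_le' hK
  rw [iterate_succ_apply']
  exact hmaps ((hmaps.mono_right (sparseBall_mono hlam)).iterate k hz)

end ISTA

lemma two_le_alpha_gamma_and_alpha {μs C₁ α γ : ℝ} (hμs : 0 < μs) (hC₁ : 1 < C₁)
    (hα : α = (1 - 1 / C₁) / μs) (hγ : γ ∈ Ico (2 * μs / (1 - 1 / C₁)) 1) :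
    2 ≤ α * γ ∧ 2 ≤ α := by
  have hβ : 0 < 1 - 1 / C₁ := by
    rw [sub_pos, div_lt_one (by linarith)]; exact hC₁
  have hαγ : 2 ≤ α * γ := by
    have hC₁' : C₁ - 1 ≠ 0 := sub_ne_zero.2 hC₁.ne'
    calc (2 : ℝ) = α * (2 * μs / (1 - 1 / C₁)) := by rw [hα]; field_simp
      _ ≤ α * γ := by gcongr; exacts [by rw [hα]; positivity, hγ.1]
  have hγ0 : 0 < γ := lt_of_lt_of_le (by positivity) hγ.1
  exact ⟨hαγ, by nlinarith [hγ.2]⟩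

lemma mul_alpha_add_le {μs C₁ α ε lam : ℝ} (hμs : 0 < μs) (hC₁ : 0 < C₁)
    (hα : α = (1 - 1 / C₁) / μs) (hlam : C₁ * ε ≤ lam) : μs * (α * lam) + ε ≤ lam := by
  have hε : ε ≤ lam / C₁ := (le_div_iff₀ hC₁).2 (by linarith)
  rw [← mul_assoc, hα, mul_div_cancel₀ _ hμs.ne', sub_mul, one_mul, one_div, inv_mul_eq_div]
  linarith

theorem istc_convergence_general {n p : ℕ} (Ψ : Matrix (Fin n) (Fin p) ℝ)
    (μ ε C₁ α γ lam₀ : ℝ) (s K : ℕ)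
    (xdag : Fin p → ℝ) (η y : Fin n → ℝ) (Adag : Finset (Fin p))
    (hcol : ∀ i, ∑ k, Ψ k i ^ 2 = 1)
    (hcoh : ∀ i j, i ≠ j → |∑ k, Ψ k i * Ψ k j| ≤ μ) (hμpos : 0 < μ)
    (hsuppdag : Function.support xdag = (Adag : Set (Fin p)))
    (hcard : Adag.card = s) (hs : 1 ≤ s) (hμs : μ * s < 1 / 2)
    (hy : y = Ψ.mulVec xdag + η)
    (hη : Real.sqrt (∑ k, η k ^ 2) ≤ ε)
    (hC : 1 / (1 - 2 * μ * s) < C₁)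
    (hα : α = (1 - 1 / C₁) / (μ * s))
    (hγ : γ ∈ Set.Ico (2 * μ * s / (1 - 1 / C₁)) 1)
    (hK : 1 ≤ K)
    (xseq : ℕ → Fin p → ℝ)
    (hx0 : xseq 0 = 0)
    (hxstep : ∀ ℓ : ℕ, xseq (ℓ + 1) =
      (fun z : Fin p → ℝ => fun i =>
          softThresh (γ ^ (ℓ + 1) * lam₀)
            (z i + Ψ.transpose.mulVec (y - Ψ.mulVec z) i))^[K] (xseq ℓ))
    (hlam₀ : ‖xdag‖ ≤ α * γ * lam₀)
    (lstar : ℕ) (hlstar_pos : 1 ≤ lstar)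
    (hlstar : γ ^ lstar * lam₀ < C₁ * ε)
    (hlstar_first : ∀ m < lstar, C₁ * ε ≤ γ ^ m * lam₀) :
    Function.support (xseq (lstar - 1)) ⊆ (Adag : Set (Fin p)) ∧
    ‖xseq (lstar - 1) - xdag‖ ≤ (C₁ - 1) * ε / (μ * s) := by
  subst hy hcard
  have hμs0 : 0 < μ * #Adag := mul_pos hμpos (by exact_mod_cast hs)
  have hC₁ : 1 < C₁ := lt_of_le_of_lt
    ((one_le_div (by linarith)).2 (by linarith)) hC
  obtain ⟨hαγ, hα2⟩ := two_le_alpha_gamma_and_alpha hμs0 hC₁ hα (by rwa [← mul_assoc])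
  have hε0 : 0 ≤ ε := (Real.sqrt_nonneg _).trans hη
  have invariant : ∀ ℓ < lstar, xseq ℓ ∈ sparseBall Adag xdag (α * (γ ^ (ℓ + 1) * lam₀)) := by
    intro ℓ
    induction ℓ with
    | zero => intro _; simpa [sparseBall, hx0, mul_assoc] using hlam₀
    | succ ℓ ih =>
      intro hℓ
      have hlam : C₁ * ε ≤ γ ^ (ℓ + 1) * lam₀ := hlstar_first _ hℓ
      have hlam0 : 0 ≤ γ ^ (ℓ + 1) * lam₀ := by nlinarith
      rw [hxstep ℓ]
      refine sparseBall_mono ?_ (iterate_istaStep_mem hcol hcoh hμpos.le hsuppdag.le hη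
        (mul_alpha_add_le hμs0 (by linarith) hα hlam) (by nlinarith) hK (ih (by omega)))
      calc 2 * (γ ^ (ℓ + 1) * lam₀) ≤ α * γ * (γ ^ (ℓ + 1) * lam₀) := by gcongr
        _ = α * (γ ^ (ℓ + 1 + 1) * lam₀) := by ring
  obtain ⟨hsupp, hnorm⟩ := invariant (lstar - 1) (by omega)
  refine ⟨hsupp, hnorm.trans ?_⟩
  rw [Nat.sub_add_cancel hlstar_pos]
  calc α * (γ ^ lstar * lam₀) ≤ α * (C₁ * ε) := by gcongr
    _ = (C₁ - 1) * ε / (μ * #Adag) := by rw [hα]; field_simp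

/-- Theorem 1 for ISTC, parts (i)–(ii): along the continuation path `λ_ℓ = γ^ℓ λ₀`,
with `x(λ₀) = 0` and `x(λ_ℓ)` obtained by `K` soft-thresholding iterations at level
`λ_ℓ` warm-started from `x(λ_{ℓ−1})`, stopping at the first index `ℓ*` with
`λ_{ℓ*} < λ* = C₁ε` and returning `x* = x(λ_{ℓ*−1})`, one has
(i) `supp(x*) ⊂ A†` and (ii) `‖x* − x†‖_{ℓ∞} ≤ (C₁ − 1)ε/(μs)`. -/
theorem istc_convergence {n p : ℕ} (Ψ : Matrix (Fin n) (Fin p) ℝ)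
    (μ ε C₁ α γ lam₀ : ℝ) (s K : ℕ)
    (xdag : Fin p → ℝ) (η y : Fin n → ℝ) (Adag : Finset (Fin p))
    (hcol : ∀ i, ∑ k, Ψ k i ^ 2 = 1)
    (hcoh : ∀ i j, i ≠ j → |∑ k, Ψ k i * Ψ k j| ≤ μ) (hμpos : 0 < μ)
    (hsuppdag : Function.support xdag = (Adag : Set (Fin p)))
    (hcard : Adag.card = s) (hs : 1 ≤ s) (hμs : μ * s < 1 / 2)
    (hy : y = Ψ.mulVec xdag + η)
    (hη : Real.sqrt (∑ k, η k ^ 2) ≤ ε) (hε : 0 < ε)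
    (hC : 1 / (1 - 2 * μ * s) < C₁)
    (hα : α = (1 - 1 / C₁) / (μ * s))
    (hγ : γ ∈ Set.Ico (2 * μ * s / (1 - 1 / C₁)) 1)
    (hK : 1 ≤ K)
    (xseq : ℕ → Fin p → ℝ)
    (hx0 : xseq 0 = 0)
    (hxstep : ∀ ℓ : ℕ, xseq (ℓ + 1) =
      (fun z : Fin p → ℝ => fun i =>
          softThresh (γ ^ (ℓ + 1) * lam₀)
            (z i + Ψ.transpose.mulVec (y - Ψ.mulVec z) i))^[K] (xseq ℓ))
    (hlam₀ : ‖xdag‖ ≤ α * γ * lam₀)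
    (lstar : ℕ) (hlstar_pos : 1 ≤ lstar)
    (hlstar : γ ^ lstar * lam₀ < C₁ * ε)
    (hlstar_first : ∀ m < lstar, C₁ * ε ≤ γ ^ m * lam₀) :
    Function.support (xseq (lstar - 1)) ⊆ (Adag : Set (Fin p)) ∧
    ‖xseq (lstar - 1) - xdag‖ ≤ (C₁ - 1) * ε / (μ * s) :=
  istc_convergence_general Ψ μ ε C₁ α γ lam₀ s K xdag η y Adag hcol hcoh hμpos hsuppdag hcard hs hμs
    hy hη hC hα hγ hK xseq hx0 hxstep hlam₀ lstar hlstar_pos hlstar hlstar_first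
end

section
/- (Theorem 1 for IHTC, exact support recovery) Under the setting of the IHTC continuation algorithm — Ψ ∈ ℝ^{n×p} with unit-norm columns and mutual coherence μ satisfying μ·s < 1/2; x† ∈ ℝ^p with support A†, |A†| = s ≥ 1; y = Ψ x† + η with ‖η‖₂ ≤ ε > 0; C₀ > 1/(2(1 − 2μs)²); α = (1 − 1/√(2C₀))/(μs); γ ∈ [(2μs/(1 − 1/√(2C₀)))², 1); K ≥ 1; λ_ℓ = γ^ℓ λ₀ with ‖x†‖_{ℓ∞} ≤ α √(2γλ₀); x(λ₀) = 0 and x(λ_ℓ) obtained by K iterations of z ↦ H_{λ_ℓ}(z + Ψᵗ(y − Ψ z)) from x(λ_{ℓ−1}); output x* = x(λ_{ℓ*−1}) where ℓ* is the first index with λ_{ℓ*} < C₀ε² — if min_{i ∈ A†} |x†_i| > (√(2C₀) − 1)ε/(μs), then supp(x*) = A†. -/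
/-!
The gradient step `g = z + Ψᵀ(y - Ψz)` satisfies `g - x† = (1 - ΨᵀΨ)(z - x†) + Ψᵀη`, and
`1 - ΨᵀΨ` has zero diagonal and entries at most `μ`. So if `z` is supported in `A†` with
`‖z - x†‖_∞ ≤ D`, then `‖g - x†‖_∞ ≤ μ s D + ε`. Writing `T = √(2λ)`, with `D = αT` and
`λ ≥ C₀ε²` this is at most `T`; thresholding then keeps the support inside `A†` and gives
`‖H_λ(g) - x†‖_∞ ≤ 2T ≤ α √γ T`, which is the same invariant at the next level `γλ` (and, as
`α ≥ 2`, at the same level for the inner iterations). At the output, an entry of `x†` that the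
iterate misses therefore has size at most `α √(2λ_{ℓ*}) < α √(2C₀) ε = (√(2C₀) - 1)ε/(μs)`, which
the minimal-signal condition excludes.
-/

open Finset Matrix

/-- The hard-thresholding operator `H_λ(t) = t` if `|t| > √(2λ)`, else `0`. -/
noncomputable def hardThresh (lam t : ℝ) : ℝ :=
  if Real.sqrt (2 * lam) < |t| then t else 0

lemma hardThresh_eq_zero_of_abs_le {lam t : ℝ} (h : |t| ≤ Real.sqrt (2 * lam)) :
    hardThresh lam t = 0 :=
  if_neg h.not_gt

lemma abs_hardThresh_sub_le {lam t a : ℝ} (h : |t - a| ≤ Real.sqrt (2 * lam)) :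
    |hardThresh lam t - a| ≤ 2 * Real.sqrt (2 * lam) := by
  unfold hardThresh
  split_ifs with ht
  · linarith [Real.sqrt_nonneg (2 * lam)]
  · calc |0 - a| ≤ |0 - t| + |t - a| := abs_sub_le _ _ _
      _ ≤ 2 * Real.sqrt (2 * lam) := by rw [zero_sub, abs_neg]; linarith [not_lt.mp ht]

section

variable {κ ι : Type*} [Fintype κ]

lemma abs_transpose_mulVec_le {Ψ : Matrix κ ι ℝ} {η : κ → ℝ} {ε : ℝ}
    (hcol : ∀ i, ∑ k, Ψ k i ^ 2 = 1) (hη : Real.sqrt (∑ k, η k ^ 2) ≤ ε) (i : ι) :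
    |(Ψᵀ *ᵥ η) i| ≤ ε := by
  have hcs := sum_mul_sq_le_sq_mul_sq univ (fun k => Ψ k i) η
  rw [hcol i, one_mul] at hcs
  exact (Real.abs_le_sqrt hcs).trans hη

lemma abs_one_sub_transpose_mul_self_le [DecidableEq ι] {Ψ : Matrix κ ι ℝ} {μ : ℝ}
    (hcol : ∀ i, ∑ k, Ψ k i ^ 2 = 1) (hcoh : ∀ i j, i ≠ j → |∑ k, Ψ k i * Ψ k j| ≤ μ)
    (hμ : 0 ≤ μ) (i j : ι) :
    |(1 - Ψᵀ * Ψ : Matrix ι ι ℝ) i j| ≤ μ := by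
  rcases eq_or_ne i j with rfl | hij
  · simpa [mul_apply, ← sq, hcol] using hμ
  · simpa [mul_apply, one_apply_ne hij] using hcoh i j hij

variable [Fintype ι]

lemma abs_mulVec_le_of_support_subset {κ' : Type*} {M : Matrix κ' ι ℝ} {v : ι → ℝ}
    {A : Finset ι} {μ D : ℝ} (hM : ∀ i j, |M i j| ≤ μ) (hv : Function.support v ⊆ A)
    (hD : ∀ j, |v j| ≤ D) (i : κ') :
    |(M *ᵥ v) i| ≤ μ * #A * D := by
  have hsum : (M *ᵥ v) i = ∑ j ∈ A, M i j * v j :=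
    (sum_subset (subset_univ A) fun j _ hj => by
      rw [Function.support_subset_iff'.mp hv j hj, mul_zero]).symm
  calc |(M *ᵥ v) i| ≤ ∑ j ∈ A, |M i j * v j| := hsum ▸ abs_sum_le_sum_abs _ _
    _ ≤ ∑ _j ∈ A, μ * D := sum_le_sum fun j _ => by
        rw [abs_mul]
        exact mul_le_mul (hM i j) (hD j) (abs_nonneg _) ((abs_nonneg _).trans (hM i j))
    _ = μ * #A * D := by rw [sum_const, nsmul_eq_mul]; ring

def gradStep (Ψ : Matrix κ ι ℝ) (y : κ → ℝ) (z : ι → ℝ) : ι → ℝ :=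
  z + Ψᵀ *ᵥ (y - Ψ *ᵥ z)

noncomputable def ihtStep (Ψ : Matrix κ ι ℝ) (y : κ → ℝ) (lam : ℝ) (z : ι → ℝ) : ι → ℝ :=
  fun i => hardThresh lam (gradStep Ψ y z i)

variable [DecidableEq ι]

lemma gradStep_sub_eq (Ψ : Matrix κ ι ℝ) (x z : ι → ℝ) (η : κ → ℝ) :
    gradStep Ψ (Ψ *ᵥ x + η) z - x = (1 - Ψᵀ * Ψ) *ᵥ (z - x) + Ψᵀ *ᵥ η := by
  simp only [gradStep, sub_mulVec, one_mulVec, ← mulVec_mulVec, mulVec_add, mulVec_sub]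
  abel

lemma abs_gradStep_sub_le {Ψ : Matrix κ ι ℝ} {x z : ι → ℝ} {η : κ → ℝ} {A : Finset ι}
    {μ ε D : ℝ} (hM : ∀ i j, |(1 - Ψᵀ * Ψ : Matrix ι ι ℝ) i j| ≤ μ)
    (hnoise : ∀ i, |(Ψᵀ *ᵥ η) i| ≤ ε) (hx : Function.support x ⊆ A)
    (hz : Function.support z ⊆ A) (hD : ∀ i, |z i - x i| ≤ D) (i : ι) :
    |gradStep Ψ (Ψ *ᵥ x + η) z i - x i| ≤ μ * #A * D + ε := by
  have hzx : Function.support (z - x) ⊆ A :=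
    (Function.support_sub z x).trans (Set.union_subset hz hx)
  calc |gradStep Ψ (Ψ *ᵥ x + η) z i - x i|
      = |((1 - Ψᵀ * Ψ) *ᵥ (z - x)) i + (Ψᵀ *ᵥ η) i| :=
        congrArg _ (congrFun (gradStep_sub_eq Ψ x z η) i)
    _ ≤ |((1 - Ψᵀ * Ψ) *ᵥ (z - x)) i| + |(Ψᵀ *ᵥ η) i| := abs_add_le _ _
    _ ≤ μ * #A * D + ε :=
        add_le_add (abs_mulVec_le_of_support_subset hM hzx hD i) (hnoise i)

lemma ihtStep_spec {Ψ : Matrix κ ι ℝ} {x z : ι → ℝ} {η : κ → ℝ} {A : Finset ι}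
    {μ ε D lam : ℝ} (hM : ∀ i j, |(1 - Ψᵀ * Ψ : Matrix ι ι ℝ) i j| ≤ μ)
    (hnoise : ∀ i, |(Ψᵀ *ᵥ η) i| ≤ ε) (hx : Function.support x ⊆ A)
    (hz : Function.support z ⊆ A) (hD : ∀ i, |z i - x i| ≤ D)
    (hlam : μ * #A * D + ε ≤ Real.sqrt (2 * lam)) :
    Function.support (ihtStep Ψ (Ψ *ᵥ x + η) lam z) ⊆ A ∧
      ∀ i, |ihtStep Ψ (Ψ *ᵥ x + η) lam z i - x i| ≤ 2 * Real.sqrt (2 * lam) := by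
  have hg i := (abs_gradStep_sub_le hM hnoise hx hz hD i).trans hlam
  refine ⟨Function.support_subset_iff'.mpr fun i hi => hardThresh_eq_zero_of_abs_le ?_,
    fun i => abs_hardThresh_sub_le (hg i)⟩
  simpa [Function.support_subset_iff'.mp hx i hi] using hg i

lemma iterate_ihtStep_spec {Ψ : Matrix κ ι ℝ} {x z : ι → ℝ} {η : κ → ℝ} {A : Finset ι}
    {μ ε D lam : ℝ} {K : ℕ} (hM : ∀ i j, |(1 - Ψᵀ * Ψ : Matrix ι ι ℝ) i j| ≤ μ)
    (hnoise : ∀ i, |(Ψᵀ *ᵥ η) i| ≤ ε) (hx : Function.support x ⊆ A)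
    (hz : Function.support z ⊆ A) (hD : ∀ i, |z i - x i| ≤ D)
    (hlam : μ * #A * D + ε ≤ Real.sqrt (2 * lam)) (h2D : 2 * Real.sqrt (2 * lam) ≤ D)
    (hK : K ≠ 0) :
    Function.support ((ihtStep Ψ (Ψ *ᵥ x + η) lam)^[K] z) ⊆ A ∧
      ∀ i, |(ihtStep Ψ (Ψ *ᵥ x + η) lam)^[K] z i - x i| ≤ 2 * Real.sqrt (2 * lam) := by
  obtain ⟨k, rfl⟩ := Nat.exists_eq_succ_of_ne_zero hK
  induction k with
  | zero => exact ihtStep_spec hM hnoise hx hz hD hlam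
  | succ k ih =>
    obtain ⟨hsupp, herr⟩ := ih k.succ_ne_zero
    rw [Function.iterate_succ_apply']
    exact ihtStep_spec hM hnoise hx hsupp (fun i => (herr i).trans h2D) hlam

lemma ihtc_spec {Ψ : Matrix κ ι ℝ} {x : ι → ℝ} {η : κ → ℝ} {A : Finset ι} {μ ε α γ lam₀ : ℝ}
    {K L : ℕ} {xseq : ℕ → ι → ℝ} (hM : ∀ i j, |(1 - Ψᵀ * Ψ : Matrix ι ι ℝ) i j| ≤ μ)
    (hnoise : ∀ i, |(Ψᵀ *ᵥ η) i| ≤ ε) (hx : Function.support x ⊆ A) (hK : K ≠ 0)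
    (hx0 : xseq 0 = 0)
    (hxstep : ∀ ℓ, xseq (ℓ + 1) = (ihtStep Ψ (Ψ *ᵥ x + η) (γ ^ (ℓ + 1) * lam₀))^[K] (xseq ℓ))
    (hγ : 0 ≤ γ) (hα : 2 ≤ α) (hαγ : 2 ≤ α * Real.sqrt γ)
    (hstart : ‖x‖ ≤ α * Real.sqrt (2 * γ * lam₀))
    (habsorb : ∀ ℓ, ℓ + 1 < L → μ * #A * (α * Real.sqrt (2 * (γ ^ (ℓ + 1) * lam₀))) + ε ≤
      Real.sqrt (2 * (γ ^ (ℓ + 1) * lam₀))) :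
    ∀ ℓ < L, Function.support (xseq ℓ) ⊆ A ∧
      ∀ i, |xseq ℓ i - x i| ≤ α * Real.sqrt (2 * (γ ^ (ℓ + 1) * lam₀)) := by
  intro ℓ hℓ
  induction ℓ with
  | zero =>
    refine ⟨by simp [hx0], fun i => ?_⟩
    simpa [hx0, mul_assoc] using (norm_le_pi_norm x i).trans hstart
  | succ ℓ ih =>
    obtain ⟨hsupp, herr⟩ := ih (by omega)
    set T := Real.sqrt (2 * (γ ^ (ℓ + 1) * lam₀))
    have hT : 0 ≤ T := Real.sqrt_nonneg _
    have hnext : Real.sqrt (2 * (γ ^ (ℓ + 1 + 1) * lam₀)) = Real.sqrt γ * T := by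
      rw [← Real.sqrt_mul hγ]; ring_nf
    rw [hxstep]
    obtain ⟨hsupp', herr'⟩ := iterate_ihtStep_spec hM hnoise hx hsupp herr (habsorb ℓ hℓ)
      (by nlinarith) hK
    refine ⟨hsupp', fun i => (herr' i).trans ?_⟩
    rw [hnext, ← mul_assoc α]
    exact mul_le_mul_of_nonneg_right hαγ hT

end

lemma one_lt_sqrt_two_mul_of_lt {m C₀ : ℝ} (hm0 : 0 < m) (hm : m < 1 / 2)
    (hC : 1 / (2 * (1 - 2 * m) ^ 2) < C₀) : 1 < Real.sqrt (2 * C₀) := by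
  have hsq : 2 * (1 - 2 * m) ^ 2 ≤ 2 := by nlinarith
  have hhalf : 1 / 2 ≤ 1 / (2 * (1 - 2 * m) ^ 2) :=
    one_div_le_one_div_of_le (by nlinarith) hsq
  exact (Real.lt_sqrt zero_le_one).mpr (by linarith)

lemma two_le_div_mul_sqrt {m b γ : ℝ} (hm : 0 < m) (hb : 0 < b) (hγ : (2 * m / b) ^ 2 ≤ γ) :
    2 ≤ b / m * Real.sqrt γ :=
  calc 2 = b / m * (2 * m / b) := by field_simp
    _ ≤ b / m * Real.sqrt γ := by
        gcongr
        exact Real.le_sqrt_of_sq_le hγ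

lemma sqrt_two_mul_mul_eq {C₀ ε : ℝ} (hε : 0 ≤ ε) :
    Real.sqrt (2 * C₀) * ε = Real.sqrt (2 * (C₀ * ε ^ 2)) := by
  rw [← mul_assoc, Real.sqrt_mul' _ (sq_nonneg ε), Real.sqrt_sq hε]

lemma add_le_sqrt_two_mul_of_le {C₀ ε lam : ℝ} (hS : 0 < Real.sqrt (2 * C₀)) (hε : 0 ≤ ε)
    (hlam : C₀ * ε ^ 2 ≤ lam) :
    (1 - 1 / Real.sqrt (2 * C₀)) * Real.sqrt (2 * lam) + ε ≤ Real.sqrt (2 * lam) := by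
  have hST : Real.sqrt (2 * C₀) * ε ≤ Real.sqrt (2 * lam) := by
    rw [sqrt_two_mul_mul_eq hε]; exact Real.sqrt_le_sqrt (by linarith)
  have hεT : ε ≤ 1 / Real.sqrt (2 * C₀) * Real.sqrt (2 * lam) := by
    rw [one_div_mul_eq_div, le_div_iff₀ hS]; linarith
  linarith
lemma div_mul_sqrt_two_mul_lt {m C₀ ε lam : ℝ} (hm : 0 < m) (hS : 1 < Real.sqrt (2 * C₀))
    (hε : 0 ≤ ε) (hlam : 0 ≤ lam) (hlt : lam < C₀ * ε ^ 2) :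
    (1 - 1 / Real.sqrt (2 * C₀)) / m * Real.sqrt (2 * lam) < (Real.sqrt (2 * C₀) - 1) * ε / m := by
  have hb : 0 < 1 - 1 / Real.sqrt (2 * C₀) := sub_pos.mpr ((div_lt_one (by linarith)).mpr hS)
  have hsqrt : Real.sqrt (2 * lam) < Real.sqrt (2 * C₀) * ε := by
    rw [sqrt_two_mul_mul_eq hε]
    exact Real.sqrt_lt_sqrt (by positivity) (by linarith)
  calc (1 - 1 / Real.sqrt (2 * C₀)) / m * Real.sqrt (2 * lam)
      < (1 - 1 / Real.sqrt (2 * C₀)) / m * (Real.sqrt (2 * C₀) * ε) :=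
        mul_lt_mul_of_pos_left hsqrt (div_pos hb hm)
    _ = (Real.sqrt (2 * C₀) - 1) * ε / m := by field_simp

theorem ihtc_exact_support_recovery_general {n p : ℕ} (Ψ : Matrix (Fin n) (Fin p) ℝ)
    (μ ε C₀ α γ lam₀ : ℝ) (s K : ℕ)
    (xdag : Fin p → ℝ) (η y : Fin n → ℝ) (Adag : Finset (Fin p))
    (hcol : ∀ i, ∑ k, Ψ k i ^ 2 = 1)
    (hcoh : ∀ i j, i ≠ j → |∑ k, Ψ k i * Ψ k j| ≤ μ) (hμpos : 0 < μ)
    (hsuppdag : Function.support xdag = (Adag : Set (Fin p)))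
    (hcard : Adag.card = s) (hs : 1 ≤ s) (hμs : μ * s < 1 / 2)
    (hy : y = Ψ.mulVec xdag + η)
    (hη : Real.sqrt (∑ k, η k ^ 2) ≤ ε)
    (hC : 1 / (2 * (1 - 2 * μ * s) ^ 2) < C₀)
    (hα : α = (1 - 1 / Real.sqrt (2 * C₀)) / (μ * s))
    (hγ : γ ∈ Set.Ico ((2 * μ * s / (1 - 1 / Real.sqrt (2 * C₀))) ^ 2) 1)
    (hK : 1 ≤ K)
    (xseq : ℕ → Fin p → ℝ)
    (hx0 : xseq 0 = 0)
    (hxstep : ∀ ℓ : ℕ, xseq (ℓ + 1) =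
      (fun z : Fin p → ℝ => fun i =>
          hardThresh (γ ^ (ℓ + 1) * lam₀)
            (z i + Ψ.transpose.mulVec (y - Ψ.mulVec z) i))^[K] (xseq ℓ))
    (hlam₀ : ‖xdag‖ ≤ α * Real.sqrt (2 * γ * lam₀))
    (lstar : ℕ) (hlstar_pos : 1 ≤ lstar)
    (hlstar : γ ^ lstar * lam₀ < C₀ * ε ^ 2)
    (hlstar_first : ∀ m < lstar, C₀ * ε ^ 2 ≤ γ ^ m * lam₀)
    (hmin : ∀ i ∈ Adag, (Real.sqrt (2 * C₀) - 1) * ε / (μ * s) < |xdag i|) :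
    Function.support (xseq (lstar - 1)) = (Adag : Set (Fin p)) := by
  subst hy
  have hμs0 : 0 < μ * s := mul_pos hμpos (by exact_mod_cast hs)
  have hS : 1 < Real.sqrt (2 * C₀) := one_lt_sqrt_two_mul_of_lt hμs0 hμs (by rwa [← mul_assoc])
  have hb : 0 < 1 - 1 / Real.sqrt (2 * C₀) := sub_pos.mpr ((div_lt_one (by linarith)).mpr hS)
  have hα0 : 0 < α := hα ▸ div_pos hb hμs0
  have hγ0 : 0 ≤ γ := (sq_nonneg _).trans hγ.1
  have hαγ : 2 ≤ α * Real.sqrt γ :=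
    hα ▸ two_le_div_mul_sqrt hμs0 hb (by rw [← mul_assoc]; exact hγ.1)
  have hα2 : 2 ≤ α := hαγ.trans (mul_le_of_le_one_right hα0.le (Real.sqrt_le_one.mpr hγ.2.le))
  have hε0 : 0 ≤ ε := (Real.sqrt_nonneg _).trans hη
  have hμsα : μ * s * α = 1 - 1 / Real.sqrt (2 * C₀) := by rw [hα]; field_simp
  have habsorb : ∀ ℓ, ℓ + 1 < lstar → μ * #Adag * (α * Real.sqrt (2 * (γ ^ (ℓ + 1) * lam₀))) + ε ≤
      Real.sqrt (2 * (γ ^ (ℓ + 1) * lam₀)) := fun ℓ hℓ => by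
    rw [hcard, ← mul_assoc, hμsα]
    exact add_le_sqrt_two_mul_of_le (by linarith) hε0 (hlstar_first (ℓ + 1) hℓ)
  obtain ⟨hsupp, herr⟩ := ihtc_spec (abs_one_sub_transpose_mul_self_le hcol hcoh hμpos.le)
    (abs_transpose_mulVec_le hcol hη) hsuppdag.le (by omega) hx0 hxstep hγ0 hα2 hαγ hlam₀ habsorb
    (lstar - 1) (by omega)
  refine hsupp.antisymm fun i hi hzero => ?_
  have hlast := herr i
  rw [Nat.sub_add_cancel hlstar_pos, hzero, zero_sub, abs_neg] at hlast
  have hC₀ : 0 < 2 * C₀ := Real.sqrt_pos.mp (by linarith)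
  have hlam₀0 : 0 ≤ lam₀ := by
    have := hlstar_first 0 hlstar_pos; rw [pow_zero, one_mul] at this; nlinarith [sq_nonneg ε]
  have hgap := div_mul_sqrt_two_mul_lt hμs0 hS hε0 (by positivity) hlstar
  rw [← hα] at hgap
  linarith [hmin i hi]

/-- Theorem 1 for IHTC, exact support recovery: in the IHTC continuation setting, if
`min_{i ∈ A†} |x†_i| > (√(2C₀) − 1)ε/(μs)`, then the output `x* = x(λ_{ℓ*−1})`
satisfies `supp(x*) = A†`. -/
theorem ihtc_exact_support_recovery {n p : ℕ} (Ψ : Matrix (Fin n) (Fin p) ℝ)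
    (μ ε C₀ α γ lam₀ : ℝ) (s K : ℕ)
    (xdag : Fin p → ℝ) (η y : Fin n → ℝ) (Adag : Finset (Fin p))
    (hcol : ∀ i, ∑ k, Ψ k i ^ 2 = 1)
    (hcoh : ∀ i j, i ≠ j → |∑ k, Ψ k i * Ψ k j| ≤ μ) (hμpos : 0 < μ)
    (hsuppdag : Function.support xdag = (Adag : Set (Fin p)))
    (hcard : Adag.card = s) (hs : 1 ≤ s) (hμs : μ * s < 1 / 2)
    (hy : y = Ψ.mulVec xdag + η)
    (hη : Real.sqrt (∑ k, η k ^ 2) ≤ ε) (hε : 0 < ε)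
    (hC : 1 / (2 * (1 - 2 * μ * s) ^ 2) < C₀)
    (hα : α = (1 - 1 / Real.sqrt (2 * C₀)) / (μ * s))
    (hγ : γ ∈ Set.Ico ((2 * μ * s / (1 - 1 / Real.sqrt (2 * C₀))) ^ 2) 1)
    (hK : 1 ≤ K)
    (xseq : ℕ → Fin p → ℝ)
    (hx0 : xseq 0 = 0)
    (hxstep : ∀ ℓ : ℕ, xseq (ℓ + 1) =
      (fun z : Fin p → ℝ => fun i =>
          hardThresh (γ ^ (ℓ + 1) * lam₀)
            (z i + Ψ.transpose.mulVec (y - Ψ.mulVec z) i))^[K] (xseq ℓ))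
    (hlam₀ : ‖xdag‖ ≤ α * Real.sqrt (2 * γ * lam₀))
    (lstar : ℕ) (hlstar_pos : 1 ≤ lstar)
    (hlstar : γ ^ lstar * lam₀ < C₀ * ε ^ 2)
    (hlstar_first : ∀ m < lstar, C₀ * ε ^ 2 ≤ γ ^ m * lam₀)
    (hmin : ∀ i ∈ Adag, (Real.sqrt (2 * C₀) - 1) * ε / (μ * s) < |xdag i|) :
    Function.support (xseq (lstar - 1)) = (Adag : Set (Fin p)) :=
  ihtc_exact_support_recovery_general Ψ μ ε C₀ α γ lam₀ s K xdag η y Adag hcol hcoh hμpos hsuppdag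
    hcard hs hμs hy hη hC hα hγ hK xseq hx0 hxstep hlam₀ lstar hlstar_pos hlstar hlstar_first hmin
end
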